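/- Let (Ω, μ) be a probability space and let ε : Ω → ℝⁿ be an exchangeable random vector. Let R ∈ ℝⁿ have nonincreasing coordinates (R₁ ≥ ⋯ ≥ R_n), let σ be a permutation of {1,…,n}, and write R^σ for the vector with (R^σ)_i = R_{σ(i)}. Let P : ℝⁿ → ℝⁿ be a map such that for every v ∈ ℝⁿ, P v ∈ K_n and ‖v − P v‖ ≤ ‖v − w‖ for all w ∈ K_n. Let 1 ≤ k ≤ n and let U₁, …, U_k : ℝ → ℝ be differentiable convex nondecreasing functions with U_i′(t) ≥ U_{i+1}′(t) for all t ∈ ℝ and i = 1,…,k−1; assume the integrands below are integrable. Then ∫ ∑_{i=1}^k U_i((P(R + ε ω)) i) dμ(ω) ≥ ∫ ∑_{i=1}^k U_i((P(R^σ + ε ω)) i) dμ(ω): in the Informed Case with quota k, reporting the true ranking maximizes the expected utility. -/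

import Mathlib

/-!
Fix `ω`. By the rearrangement inequality the permuted report `R ∘ σ + ε ω` is dominated by the
true report `R + ε ω` in the prefix-sum order (`∑_{i<m} x_i ≤ ∑_{i<m} y_i` for all `m`). The
variational inequality of the projection onto the convex cone `K_n`, tested against directions
that shift a block of leading coordinates, shows that isotonic projection preserves this order.
Finally, if `p` is nonincreasing and its prefix sums are dominated by those of `q`, the
tangent-line bound `U_i(q_i) - U_i(p_i) ≥ U_i'(p_i) (q_i - p_i)` and Abel summation against the
nonincreasing, nonnegative weights `U_i'(p_i)` give `∑ U_i(p_i) ≤ ∑ U_i(q_i)`. So the inequality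
holds for every `ω`, and integrating it gives the claim.
-/

open MeasureTheory

noncomputable section

/-- The monotone (isotonic) cone of nonincreasing vectors in `ℝⁿ`. -/
def monoCone (n : ℕ) : Set (EuclideanSpace ℝ (Fin n)) :=
  {x | ∀ i j : Fin n, i ≤ j → x j ≤ x i}

/-- `p` is an isotonic projection of `y` onto the monotone cone. -/
def IsIsoProj {n : ℕ} (y p : EuclideanSpace ℝ (Fin n)) : Prop :=
  p ∈ monoCone n ∧ ∀ w ∈ monoCone n, ‖y - p‖ ≤ ‖y - w‖

/-- A random vector is exchangeable if its law is invariant under coordinate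
permutations. -/
def Exchangeable {n : ℕ} {Ω : Type*} [MeasurableSpace Ω] (μ : Measure Ω)
    (ε : Ω → EuclideanSpace ℝ (Fin n)) : Prop :=
  ∀ τ : Equiv.Perm (Fin n),
    Measure.map (fun ω => (WithLp.toLp 2 (fun i => ε ω (τ i)) : EuclideanSpace ℝ (Fin n))) μ =
      Measure.map ε μ

open Finset

section PrefixSum

variable {n : ℕ}

def prefixSum (x : Fin n → ℝ) (m : ℕ) : ℝ := ∑ i ∈ univ.filter fun i : Fin n => ↑i < m, x i

def prefixIndicator (n m : ℕ) : Fin n → ℝ := fun i => if ↑i < m then 1 else 0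

theorem sum_mul_prefixIndicator (x : Fin n → ℝ) (m : ℕ) :
    ∑ i, x i * prefixIndicator n m i = prefixSum x m := by
  simp [prefixIndicator, prefixSum, sum_filter]

theorem prefixSum_add (x y : Fin n → ℝ) (m : ℕ) :
    prefixSum (x + y) m = prefixSum x m + prefixSum y m :=
  sum_add_distrib

theorem prefixSum_sub (x y : Fin n → ℝ) (m : ℕ) :
    prefixSum (x - y) m = prefixSum x m - prefixSum y m :=
  sum_sub_distrib ..

theorem prefixSum_zero (x : Fin n → ℝ) : prefixSum x 0 = 0 := by
  simp [prefixSum]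

theorem prefixSum_succ (x : Fin n → ℝ) {m : ℕ} (hm : m < n) :
    prefixSum x (m + 1) = prefixSum x m + x ⟨m, hm⟩ := by
  have : univ.filter (fun i : Fin n => ↑i < m + 1) =
      insert ⟨m, hm⟩ (univ.filter fun i : Fin n => ↑i < m) := by
    ext i
    simp [Fin.ext_iff, le_iff_eq_or_lt]
  rw [prefixSum, this, sum_insert (by simp), add_comm, prefixSum]

theorem prefixSum_eq_sum_of_le (x : Fin n → ℝ) {m : ℕ} (hm : n ≤ m) : prefixSum x m = ∑ i, x i := by
  rw [prefixSum, filter_true_of_mem fun i _ => i.2.trans_le hm]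

theorem prefixSum_min (x : Fin n → ℝ) (m : ℕ) : prefixSum x (min m n) = prefixSum x m := by
  rcases le_total m n with h | h
  · rw [min_eq_left h]
  · rw [min_eq_right h, prefixSum_eq_sum_of_le x h, prefixSum_eq_sum_of_le x le_rfl]

theorem prefixSum_comp_castLE {k : ℕ} (h : k ≤ n) (x : Fin n → ℝ) (m : ℕ) :
    prefixSum (x ∘ Fin.castLE h) m = prefixSum x (min m k) := by
  have : (univ.filter fun i : Fin k => ↑i < m).map (Fin.castLEEmb h) =
      univ.filter fun j : Fin n => ↑j < min m k := by
    ext j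
    simp only [mem_map, mem_filter, mem_univ, true_and, Fin.castLEEmb_apply, lt_min_iff]
    refine ⟨?_, fun hj => ⟨⟨j, hj.2⟩, hj.1, rfl⟩⟩
    rintro ⟨i, hi, rfl⟩
    exact ⟨hi, i.2⟩
  rw [prefixSum, prefixSum, ← this, sum_map]
  rfl

theorem prefixSum_comp_perm_le {x : Fin n → ℝ} (hx : Antitone x) (σ : Equiv.Perm (Fin n))
    (m : ℕ) : prefixSum (x ∘ σ) m ≤ prefixSum x m := by
  have hmv : Monovary x (prefixIndicator n m) := by
    intro i j hij
    simp only [prefixIndicator] at hij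
    split_ifs at hij with hi hj <;> norm_num at hij
    exact hx (Fin.le_def.2 (by omega))
  rw [← sum_mul_prefixIndicator, ← sum_mul_prefixIndicator]
  exact hmv.sum_comp_perm_mul_le_sum_mul

end PrefixSum

theorem Fin.antitone_of_le_of_succ_lt {α : Type*} [Preorder α] {k : ℕ} {f : Fin k → α}
    (h : ∀ (i : Fin k) (hi : (i : ℕ) + 1 < k), f ⟨i + 1, hi⟩ ≤ f i) : Antitone f := by
  cases k with
  | zero => exact fun i => i.elim0
  | succ k => exact Fin.antitone_iff_succ_le.2 fun i => h i.castSucc (by simp)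

theorem exists_last_maximizer {α : Type*} [LinearOrder α] (f : ℕ → α) (n : ℕ) :
    ∃ j ≤ n, (∀ m ≤ n, f m ≤ f j) ∧ ∀ m ≤ n, j < m → f m < f j := by
  classical
  obtain ⟨j₀, hj₀, hmax⟩ := exists_max_image (range (n + 1)) f ⟨0, by simp⟩
  let IsMax : ℕ → Prop := fun j => ∀ m ≤ n, f m ≤ f j
  have hspec : IsMax (Nat.findGreatest IsMax n) :=
    Nat.findGreatest_spec (Nat.lt_succ_iff.1 (mem_range.1 hj₀))
      fun m hm => hmax m (mem_range.2 (Nat.lt_succ_iff.2 hm))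
  refine ⟨_, Nat.findGreatest_le n, hspec, fun m hmn hjm => ?_⟩
  by_contra! h
  exact Nat.findGreatest_is_greatest hjm hmn fun m' hm' => (hspec m' hm').trans h

theorem convex_monoCone (n : ℕ) : Convex ℝ (monoCone n) := by
  intro x hx y hy a b ha hb _ i j hij
  simp only [PiLp.add_apply, PiLp.smul_apply, smul_eq_mul]
  exact add_le_add (mul_le_mul_of_nonneg_left (hx i j hij) ha)
    (mul_le_mul_of_nonneg_left (hy i j hij) hb)

theorem sub_smul_prefixIndicator_mem_monoCone {n m : ℕ} {p : EuclideanSpace ℝ (Fin n)}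
    (hp : p ∈ monoCone n) {t : ℝ} (ht : ∀ i j : Fin n, ↑i < m → m ≤ ↑j → t ≤ p i - p j) :
    p - t • WithLp.toLp 2 (prefixIndicator n m) ∈ monoCone n := by
  intro i j hij
  have := hp i j hij
  simp only [PiLp.sub_apply, PiLp.smul_apply, prefixIndicator, smul_eq_mul]
  split_ifs with hj hi hi
  · linarith
  · exact absurd (hj.trans_le' (Fin.le_def.1 hij)) hi
  · linarith [ht i j hi (not_lt.1 hj)]
  · linarith

namespace IsIsoProj

variable {n : ℕ} {y p : EuclideanSpace ℝ (Fin n)}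

theorem inner_sub_nonpos (hp : IsIsoProj y p) {w : EuclideanSpace ℝ (Fin n)}
    (hw : w ∈ monoCone n) : inner ℝ (y - p) (w - p) ≤ 0 := by
  have : Nonempty (monoCone n) := ⟨⟨p, hp.1⟩⟩
  have : ‖y - p‖ = ⨅ w : monoCone n, ‖y - w‖ :=
    le_antisymm (le_ciInf fun w => hp.2 w w.2)
      (ciInf_le (f := fun w : monoCone n => ‖y - w‖) ⟨0, by rintro _ ⟨w, rfl⟩; positivity⟩
        ⟨p, hp.1⟩)
  exact (norm_eq_iInf_iff_real_inner_le_zero (convex_monoCone n) hp.1).1 this w hw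

theorem mul_prefixSum_sub_nonpos (hp : IsIsoProj y p) {m : ℕ} {t : ℝ}
    (ht : ∀ i j : Fin n, ↑i < m → m ≤ ↑j → t ≤ p i - p j) :
    t * (prefixSum p m - prefixSum y m) ≤ 0 := by
  have h := hp.inner_sub_nonpos (sub_smul_prefixIndicator_mem_monoCone hp.1 ht)
  rw [sub_sub_cancel_left, inner_neg_right, inner_smul_right, neg_nonpos,
    EuclideanSpace.inner_eq_star_dotProduct, star_trivial, dotProduct_comm, dotProduct,
    sum_mul_prefixIndicator, WithLp.ofLp_sub, prefixSum_sub] at h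
  linarith

theorem apply_succ_eq (hp : IsIsoProj y p) {i : ℕ} (hi : i + 1 < n)
    (h : prefixSum y (i + 1) < prefixSum p (i + 1)) : p ⟨i + 1, hi⟩ = p ⟨i, by omega⟩ := by
  have hgap : p ⟨i + 1, hi⟩ ≤ p ⟨i, by omega⟩ := hp.1 _ _ (Fin.le_def.2 (by simp))
  have := hp.mul_prefixSum_sub_nonpos (m := i + 1) (t := p ⟨i, by omega⟩ - p ⟨i + 1, hi⟩)
    fun a b ha hb => sub_le_sub (hp.1 _ _ (Fin.le_def.2 (show ↑a ≤ i by omega)))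
      (hp.1 _ _ (Fin.le_def.2 (show i + 1 ≤ ↑b by omega)))
  have := nonpos_of_mul_nonpos_left this (sub_pos.2 h)
  linarith

theorem prefixSum_le (hp : IsIsoProj y p) (m : ℕ) : prefixSum y m ≤ prefixSum p m := by
  have := hp.mul_prefixSum_sub_nonpos (m := m) (t := -1) fun i j hi hj =>
    by linarith [hp.1 i j (Fin.le_def.2 (by omega))]
  linarith

theorem prefixSum_self_le (hp : IsIsoProj y p) : prefixSum p n ≤ prefixSum y n := by
  have := hp.mul_prefixSum_sub_nonpos (m := n) (t := 1) fun _ j _ hj => absurd j.2 hj.not_gt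
  linarith

/-- Isotonic projection is monotone for the prefix-sum order. If it failed at some index, take the
last index `j` where `prefixSum p - prefixSum q` is maximal: there `p` must have a flat step
(`p j = p (j - 1)`), which is incompatible with `q` being nonincreasing. -/
theorem prefixSum_mono {x q : EuclideanSpace ℝ (Fin n)}
    (hp : IsIsoProj x p) (hq : IsIsoProj y q) (hxy : ∀ m, prefixSum x m ≤ prefixSum y m)
    (m : ℕ) : prefixSum p m ≤ prefixSum q m := by
  let D : ℕ → ℝ := fun m => prefixSum p m - prefixSum q m
  suffices ∀ m ≤ n, D m ≤ 0 by
    have := this (min m n) (min_le_right m n)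
    simp only [D, prefixSum_min] at this
    linarith
  intro m₀ hm₀
  by_contra! hpos
  obtain ⟨j, hjn, hmax, hlast⟩ := exists_last_maximizer D n
  have hDj : 0 < D j := hpos.trans_le (hmax m₀ hm₀)
  obtain ⟨i, rfl⟩ : ∃ i, j = i + 1 :=
    Nat.exists_eq_succ_of_ne_zero fun h => by simp [D, h, prefixSum_zero] at hDj
  have hin : i + 1 < n := by
    refine lt_of_le_of_ne hjn fun h => ?_
    simp only [D, h] at hDj
    linarith [hq.prefixSum_le n, hp.prefixSum_self_le, hxy n]
  have hi : D i ≤ D (i + 1) := hmax i (by omega)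
  have hi2 : D (i + 2) < D (i + 1) := hlast (i + 2) hin (by omega)
  simp only [D, prefixSum_succ _ hin, prefixSum_succ p (i.lt_succ_self.trans hin),
    prefixSum_succ q (i.lt_succ_self.trans hin)] at hi hi2
  have hflat := hp.apply_succ_eq hin (by linarith [hxy (i + 1), hq.prefixSum_le (i + 1)])
  have hq_anti : q ⟨i + 1, hin⟩ ≤ q ⟨i, by omega⟩ := hq.1 _ _ (Fin.le_def.2 (by simp))
  linarith

end IsIsoProj

theorem ConvexOn.deriv_mul_sub_le {f : ℝ → ℝ} (hf : ConvexOn ℝ Set.univ f)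
    (hd : Differentiable ℝ f) (x y : ℝ) : deriv f x * (y - x) ≤ f y - f x := by
  rcases lt_trichotomy x y with hxy | rfl | hxy
  · have h := hf.deriv_le_slope trivial trivial hxy (hd x)
    rwa [slope_def_field, le_div_iff₀ (sub_pos.2 hxy)] at h
  · simp
  · have h := hf.slope_le_deriv trivial trivial hxy (hd x)
    rw [slope_def_field, div_le_iff₀ (sub_pos.2 hxy)] at h
    linarith

/-- Abel summation: `∑ aᵢ dᵢ = ∑ (aᵢ - aᵢ₊₁) Dᵢ₊₁ + a_last D_k` with `D` the prefix sums of `d`. -/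
theorem sum_mul_nonneg_of_antitone_of_prefixSum_nonneg :
    ∀ {k : ℕ} {a d : Fin k → ℝ}, Antitone a → (∀ i, 0 ≤ a i) →
      (∀ m, 0 ≤ prefixSum d m) → 0 ≤ ∑ i, a i * d i
  | 0, _, _, _, _, _ => by simp
  | k + 1, a, d, ha, ha0, hd => by
    have hrest : 0 ≤ ∑ i : Fin k, (a i.castSucc - a (Fin.last k)) * d i.castSucc :=
      sum_mul_nonneg_of_antitone_of_prefixSum_nonneg
        (fun i j hij => sub_le_sub_right (ha (Fin.castSucc_le_castSucc_iff.2 hij)) _)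
        (fun i => sub_nonneg.2 (ha (Fin.le_last _)))
        fun m => by
          change 0 ≤ prefixSum (d ∘ Fin.castLE k.le_succ) m
          rw [prefixSum_comp_castLE]
          exact hd _
    have hlast : 0 ≤ a (Fin.last k) * ∑ i, d i :=
      mul_nonneg (ha0 _) (prefixSum_eq_sum_of_le d le_rfl ▸ hd (k + 1))
    calc 0 ≤ _ := add_nonneg hrest hlast
      _ = ∑ i, a i * d i := by
        simp only [Fin.sum_univ_castSucc, sub_mul, sum_sub_distrib, mul_add, mul_sum]
        ring

theorem sum_le_sum_of_prefixSum_le {k : ℕ} {U : Fin k → ℝ → ℝ}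
    (hUc : ∀ i, ConvexOn ℝ Set.univ (U i)) (hUm : ∀ i, Monotone (U i))
    (hUd : ∀ i, Differentiable ℝ (U i)) (hU' : ∀ t, Antitone fun i => deriv (U i) t)
    {a b : Fin k → ℝ} (ha : Antitone a) (hab : ∀ m, prefixSum a m ≤ prefixSum b m) :
    ∑ i, U i (a i) ≤ ∑ i, U i (b i) := by
  have hslope : Antitone fun i => deriv (U i) (a i) := fun i j hij =>
    ((hUc j).monotoneOn_deriv (fun x _ => hUd j x) trivial trivial (ha hij)).trans (hU' _ hij)
  have habel := sum_mul_nonneg_of_antitone_of_prefixSum_nonneg hslope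
    (fun i => (hUm i).deriv_nonneg) (d := b - a) fun m => by
      rw [prefixSum_sub]
      linarith [hab m]
  have htangent := sum_le_sum fun i (_ : i ∈ univ) =>
    (hUc i).deriv_mul_sub_le (hUd i) (a i) (b i)
  simp only [Pi.sub_apply] at habel
  rw [sum_sub_distrib] at htangent
  linarith

theorem informed_case_quota_k_truthfulness_general
    {n k : ℕ} (hkn : k ≤ n) {Ω : Type*} [MeasurableSpace Ω]
    (μ : Measure Ω)
    (ε : Ω → EuclideanSpace ℝ (Fin n))
    (R : EuclideanSpace ℝ (Fin n)) (hR : ∀ i j : Fin n, i ≤ j → R j ≤ R i)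
    (σ : Equiv.Perm (Fin n))
    (P : EuclideanSpace ℝ (Fin n) → EuclideanSpace ℝ (Fin n))
    (hP : ∀ v, IsIsoProj v (P v))
    (U : Fin k → ℝ → ℝ)
    (hUc : ∀ i, ConvexOn ℝ Set.univ (U i))
    (hUm : ∀ i, Monotone (U i))
    (hUd : ∀ i, Differentiable ℝ (U i))
    (hU' : ∀ (i : Fin k) (h : (i : ℕ) + 1 < k) (t : ℝ),
      deriv (U ⟨(i : ℕ) + 1, h⟩) t ≤ deriv (U i) t)
    (hint_true : Integrable (fun ω =>
      ∑ i : Fin k, U i (P (R + ε ω) (Fin.castLE hkn i))) μ)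
    (hint_perm : Integrable (fun ω =>
      ∑ i : Fin k,
        U i (P (WithLp.toLp 2 (fun j => R (σ j) + ε ω j) : EuclideanSpace ℝ (Fin n))
          (Fin.castLE hkn i))) μ) :
    ∫ ω, ∑ i : Fin k,
        U i (P (WithLp.toLp 2 (fun j => R (σ j) + ε ω j) : EuclideanSpace ℝ (Fin n))
          (Fin.castLE hkn i)) ∂μ ≤
      ∫ ω, ∑ i : Fin k, U i (P (R + ε ω) (Fin.castLE hkn i)) ∂μ := by
  refine integral_mono hint_perm hint_true fun ω => ?_
  set x : EuclideanSpace ℝ (Fin n) := WithLp.toLp 2 fun j => R (σ j) + ε ω j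
  have hdom (m : ℕ) : prefixSum x m ≤ prefixSum (R + ε ω) m := by
    change prefixSum (⇑R ∘ σ + ⇑(ε ω)) m ≤ _
    rw [WithLp.ofLp_add, prefixSum_add, prefixSum_add]
    linarith [prefixSum_comp_perm_le hR σ m]
  have hproj := (hP x).prefixSum_mono (hP _) hdom
  refine sum_le_sum_of_prefixSum_le (a := P x ∘ Fin.castLE hkn)
    (b := P (R + ε ω) ∘ Fin.castLE hkn) hUc hUm hUd
    (fun t => Fin.antitone_of_le_of_succ_lt (hU' · · t))
    (fun i j hij => (hP x).1 _ _ hij) fun m => ?_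
  rw [prefixSum_comp_castLE, prefixSum_comp_castLE]
  exact hproj _

/-- In the Informed Case with quota `k` and rank-dependent utilities
`U₁, …, U_k` (differentiable, convex, nondecreasing, with `U_i' ≥ U_{i+1}'`),
reporting the true ranking maximizes the expected utility. -/
theorem informed_case_quota_k_truthfulness
    {n k : ℕ} (hk1 : 1 ≤ k) (hkn : k ≤ n) {Ω : Type*} [MeasurableSpace Ω]
    (μ : Measure Ω) [IsProbabilityMeasure μ]
    (ε : Ω → EuclideanSpace ℝ (Fin n)) (hε : Exchangeable μ ε)
    (R : EuclideanSpace ℝ (Fin n)) (hR : ∀ i j : Fin n, i ≤ j → R j ≤ R i)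
    (σ : Equiv.Perm (Fin n))
    (P : EuclideanSpace ℝ (Fin n) → EuclideanSpace ℝ (Fin n))
    (hP : ∀ v, IsIsoProj v (P v))
    (U : Fin k → ℝ → ℝ)
    (hUc : ∀ i, ConvexOn ℝ Set.univ (U i))
    (hUm : ∀ i, Monotone (U i))
    (hUd : ∀ i, Differentiable ℝ (U i))
    (hU' : ∀ (i : Fin k) (h : (i : ℕ) + 1 < k) (t : ℝ),
      deriv (U ⟨(i : ℕ) + 1, h⟩) t ≤ deriv (U i) t)
    (hint_true : Integrable (fun ω =>
      ∑ i : Fin k, U i (P (R + ε ω) (Fin.castLE hkn i))) μ)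
    (hint_perm : Integrable (fun ω =>
      ∑ i : Fin k,
        U i (P (WithLp.toLp 2 (fun j => R (σ j) + ε ω j) : EuclideanSpace ℝ (Fin n))
          (Fin.castLE hkn i))) μ) :
    ∫ ω, ∑ i : Fin k,
        U i (P (WithLp.toLp 2 (fun j => R (σ j) + ε ω j) : EuclideanSpace ℝ (Fin n))
          (Fin.castLE hkn i)) ∂μ ≤
      ∫ ω, ∑ i : Fin k, U i (P (R + ε ω) (Fin.castLE hkn i)) ∂μ :=
  informed_case_quota_k_truthfulness_general hkn μ ε R hR σ P hP U hUc hUm hUd hU' hint_true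
    hint_perm
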